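/- arXiv:2605.15063 — 9 statements merged into one kernel-verified Lean document; each statement's English description precedes it below -/
import Mathlib

section
/- If a, m, t, r are positive integers such that m * t^(r^2) ≤ a^r, then the number of divisors of m lying in the interval (a, a+t] is strictly less than r. -/
/-!
Suppose `m` had `r` divisors `d₁, …, d_r` in `(a, a + t]`. Any two of them differ by less than `t`,
so their gcd is less than `t`. Adding one number at a time, `lcm` loses at most the gcd of the new
number with the previous `lcm`, which divides the product of its gcds with the previous numbers;
hence `(a + 1) ^ r ≤ ∏ dᵢ ≤ lcm dᵢ * t ^ (r choose 2) ≤ m * t ^ (r ^ 2) ≤ a ^ r`, a contradiction.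
-/

open Finset

theorem gcd_finset_lcm_dvd_prod_gcd {α ι : Type*} [CommMonoidWithZero α] [NormalizedGCDMonoid α]
    (x : α) (s : Finset ι) (f : ι → α) : gcd x (s.lcm f) ∣ ∏ i ∈ s, gcd x (f i) := by
  classical
  induction s using Finset.induction_on with
  | empty => simp
  | insert j s hj ih =>
    rw [lcm_insert, prod_insert hj]
    exact (gcd_dvd_gcd dvd_rfl (lcm_dvd_mul _ _)).trans
      ((gcd_mul_dvd_mul_gcd _ _ _).trans (mul_dvd_mul_left _ ih))

namespace Nat

theorem gcd_lt_of_ne_of_mem_Ioc {a t d e : ℕ} (hd : d ∈ Ioc a (a + t)) (he : e ∈ Ioc a (a + t))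
    (hne : d ≠ e) : gcd d e < t := by
  wlog hlt : d < e generalizing d e
  · rw [gcd_comm]; exact this he hd hne.symm (by omega)
  rw [mem_Ioc] at hd he
  calc gcd d e = gcd d (e - d) := (gcd_sub_self_right hlt.le).symm
    _ ≤ e - d := gcd_le_right _ (by omega)
    _ < t := by omega

theorem prod_le_lcm_mul_pow_choose_two {ι : Type*} (s : Finset ι) (f : ι → ℕ) (t : ℕ)
    (hgcd : ∀ i ∈ s, ∀ j ∈ s, i ≠ j → gcd (f i) (f j) ≤ t) :
    ∏ i ∈ s, f i ≤ s.lcm f * t ^ ((#s).choose 2) := by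
  classical
  induction s using Finset.induction_on with
  | empty => simp
  | insert i s hi ih =>
    rw [prod_insert hi, card_insert_of_notMem hi, choose_succ_succ', choose_one_right, pow_add]
    obtain hfi | hfi := (f i).eq_zero_or_pos
    · simp [hfi]
    have hgcd_lcm : gcd (f i) (s.lcm f) ≤ t ^ #s := by
      refine (le_of_dvd (prod_pos fun j _ => gcd_pos_of_pos_left _ hfi)
        (gcd_finset_lcm_dvd_prod_gcd (f i) s f)).trans (prod_le_pow_card _ _ _ fun j hj => ?_)
      exact hgcd i (mem_insert_self i s) j (mem_insert_of_mem hj) (ne_of_mem_of_not_mem hj hi).symm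
    have ih := ih fun j hj k hk => hgcd j (mem_insert_of_mem hj) k (mem_insert_of_mem hk)
    calc f i * ∏ j ∈ s, f j ≤ f i * s.lcm f * t ^ ((#s).choose 2) := by
          rw [mul_assoc]; exact Nat.mul_le_mul_left _ ih
      _ = gcd (f i) (s.lcm f) * (insert i s).lcm f * t ^ ((#s).choose 2) := by
          rw [lcm_insert]; exact congrArg (· * _) (gcd_mul_lcm _ _).symm
      _ ≤ t ^ #s * (insert i s).lcm f * t ^ ((#s).choose 2) := by gcongr
      _ = (insert i s).lcm f * (t ^ #s * t ^ ((#s).choose 2)) := by ring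

end Nat

theorem divisors_in_short_interval_lt_general (a m t r : ℕ) (hm : 0 < m)
    (ht : 0 < t) (hr : 0 < r) (h : m * t ^ (r ^ 2) ≤ a ^ r) :
    ((m.divisors.filter (fun d => a < d ∧ d ≤ a + t)).card) < r := by
  by_contra! hcard
  obtain ⟨T, hTsub, rfl⟩ := exists_subset_card_eq hcard
  have hT : ∀ d ∈ T, d ∣ m ∧ d ∈ Ioc a (a + t) := fun d hd => by
    have := hTsub hd
    simp only [mem_filter, Nat.mem_divisors, mem_Ioc] at this ⊢
    exact ⟨this.1.1, this.2⟩
  have hlcm : T.lcm id ≤ m := Nat.le_of_dvd hm (Finset.lcm_dvd fun d hd => (hT d hd).1)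
  have hgcd : ∀ d ∈ T, ∀ e ∈ T, d ≠ e → Nat.gcd d e ≤ t := fun d hd e he hne =>
    (Nat.gcd_lt_of_ne_of_mem_Ioc (hT d hd).2 (hT e he).2 hne).le
  refine lt_irrefl (a ^ #T) ?_
  calc a ^ #T < (a + 1) ^ #T := Nat.pow_lt_pow_left a.lt_succ_self hr.ne'
    _ ≤ ∏ d ∈ T, d := pow_card_le_prod _ _ _ fun d hd => (mem_Ioc.1 (hT d hd).2).1
    _ ≤ T.lcm id * t ^ ((#T).choose 2) := Nat.prod_le_lcm_mul_pow_choose_two T id t hgcd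
    _ ≤ m * t ^ (#T ^ 2) := Nat.mul_le_mul hlcm (Nat.pow_le_pow_right ht (Nat.choose_le_pow _ _))
    _ ≤ a ^ #T := h

theorem divisors_in_short_interval_lt (a m t r : ℕ) (ha : 0 < a) (hm : 0 < m)
    (ht : 0 < t) (hr : 0 < r) (h : m * t ^ (r ^ 2) ≤ a ^ r) :
    ((m.divisors.filter (fun d => a < d ∧ d ≤ a + t)).card) < r :=
  divisors_in_short_interval_lt_general a m t r hm ht hr h
end

section
/- For any r positive integers d_1 < d_2 < ... < d_r all dividing m with a < d_1 and d_r ≤ a + t, one has m ≥ a^r / t^(r(r-1)/2); more precisely, lcm(d_1,...,d_r) ≥ (∏_j d_j) / (∏_{i<j} gcd(d_i,d_j)) and gcd(d_i,d_j) ≤ d_j - d_i for i < j. -/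
lemma gcd_lcm_dvd_prod_gcd {α : Type*} [DecidableEq α] (X : ℕ) (d : α → ℕ) (s : Finset α) :
    Nat.gcd X (s.lcm d) ∣ ∏ i ∈ s, Nat.gcd X (d i) := by
  induction s using Finset.induction_on with
  | empty => simp
  | @insert y s' hx ih =>
    rw [Finset.lcm_insert, Finset.prod_insert hx]
    calc Nat.gcd X (Nat.lcm (d y) (s'.lcm d)) ∣ Nat.gcd X (d y * s'.lcm d) :=
          Nat.gcd_dvd_gcd_of_dvd_right _ (Nat.lcm_dvd_mul _ _)
      _ ∣ Nat.gcd X (d y) * Nat.gcd X (s'.lcm d) := gcd_mul_dvd_mul_gcd X _ _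
      _ ∣ Nat.gcd X (d y) * ∏ i ∈ s', Nat.gcd X (d i) := mul_dvd_mul_left _ ih

lemma prod_le_lcm_mul_prod_gcd {α : Type*} [LinearOrder α] [DecidableEq α]
    (d : α → ℕ) (hd : ∀ i, 0 < d i) (s : Finset α) :
    ∏ j ∈ s, d j ≤ s.lcm d *
      ∏ p ∈ (s ×ˢ s).filter (fun p => p.1 < p.2), Nat.gcd (d p.1) (d p.2) := by
  induction s using Finset.induction_on with
  | empty => simp
  | @insert x s hx ih =>
    set A1 := (s.filter fun i => x < i).image (fun i => (x, i)) with hA1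
    set A2 := (s.filter fun i => i < x).image (fun i => (i, x)) with hA2
    have hT : ((insert x s ×ˢ insert x s).filter fun p => p.1 < p.2)
        = (((s ×ˢ s).filter fun p => p.1 < p.2) ∪ A1) ∪ A2 := by
      ext ⟨p1, p2⟩
      simp only [hA1, hA2, Finset.mem_filter, Finset.mem_product, Finset.mem_insert,
        Finset.mem_union, Finset.mem_image, Prod.mk.injEq]
      constructor
      · rintro ⟨⟨h1 | h1, h2 | h2⟩, hlt⟩
        · exact absurd (h1 ▸ h2 ▸ hlt) (lt_irrefl _)
        · exact Or.inl (Or.inr ⟨p2, ⟨h2, h1 ▸ hlt⟩, h1.symm, rfl⟩)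
        · exact Or.inr ⟨p1, ⟨h1, h2 ▸ hlt⟩, rfl, h2.symm⟩
        · exact Or.inl (Or.inl ⟨⟨h1, h2⟩, hlt⟩)
      · rintro ((⟨⟨h1, h2⟩, hlt⟩ | ⟨i, ⟨hi, hxi⟩, h1, h2⟩) | ⟨i, ⟨hi, hxi⟩, h1, h2⟩)
        · exact ⟨⟨Or.inr h1, Or.inr h2⟩, hlt⟩
        · subst h1; subst h2; exact ⟨⟨Or.inl rfl, Or.inr hi⟩, hxi⟩
        · subst h1; subst h2; exact ⟨⟨Or.inr hi, Or.inl rfl⟩, hxi⟩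
    have hd1 : Disjoint ((s ×ˢ s).filter fun p => p.1 < p.2) A1 := by
      rw [Finset.disjoint_left]
      rintro ⟨p1, p2⟩ hp hq
      simp only [hA1, Finset.mem_filter, Finset.mem_product, Finset.mem_image,
        Prod.mk.injEq] at hp hq
      obtain ⟨i, _, h1, _⟩ := hq
      exact hx (h1 ▸ hp.1.1)
    have hd2 : Disjoint (((s ×ˢ s).filter fun p => p.1 < p.2) ∪ A1) A2 := by
      rw [Finset.disjoint_left]
      rintro ⟨p1, p2⟩ hp hq
      simp only [hA1, hA2, Finset.mem_union, Finset.mem_filter, Finset.mem_product,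
        Finset.mem_image, Prod.mk.injEq] at hp hq
      obtain ⟨i, hi, h1, h2⟩ := hq
      rcases hp with ⟨⟨_, h⟩, _⟩ | ⟨j, hj, h3, h4⟩
      · exact hx (h2 ▸ h)
      · subst h1; exact absurd h3 (ne_of_lt hi.2).symm
    have hprodA1 : ∏ p ∈ A1, Nat.gcd (d p.1) (d p.2)
        = ∏ i ∈ s.filter fun i => x < i, Nat.gcd (d x) (d i) := by
      rw [hA1, Finset.prod_image]
      intro i _ j _ h
      exact (Prod.mk.injEq _ _ _ _ ▸ h).2
    have hprodA2 : ∏ p ∈ A2, Nat.gcd (d p.1) (d p.2)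
        = ∏ i ∈ s.filter fun i => i < x, Nat.gcd (d x) (d i) := by
      rw [hA2, Finset.prod_image]
      · exact Finset.prod_congr rfl fun i _ => Nat.gcd_comm _ _
      · intro i _ j _ h
        exact (Prod.mk.injEq _ _ _ _ ▸ h).1
    have hsplit : (∏ i ∈ s.filter fun i => x < i, Nat.gcd (d x) (d i)) *
        ∏ i ∈ s.filter fun i => i < x, Nat.gcd (d x) (d i)
        = ∏ i ∈ s, Nat.gcd (d x) (d i) := by
      rw [show (s.filter fun i => i < x) = s.filter fun i => ¬ x < i from
        Finset.filter_congr fun i hi => by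
          constructor
          · exact fun h => not_lt_of_gt h
          · intro h
            rcases lt_or_eq_of_le (le_of_not_gt h) with h' | h'
            · exact h'
            · exact absurd (h' ▸ hi) hx]
      exact Finset.prod_filter_mul_prod_filter_not s _ _
    rw [hT, Finset.prod_union hd2, Finset.prod_union hd1, hprodA1, hprodA2,
      Finset.prod_insert hx, Finset.lcm_insert, mul_assoc, hsplit]
    set L := s.lcm d
    set G := ∏ i ∈ s, Nat.gcd (d x) (d i)
    set P := ∏ p ∈ (s ×ˢ s).filter fun p => p.1 < p.2, Nat.gcd (d p.1) (d p.2)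
    have hGpos : 0 < G := Finset.prod_pos fun i _ => Nat.gcd_pos_of_pos_left _ (hd x)
    have hg : Nat.gcd (d x) L ≤ G := Nat.le_of_dvd hGpos (gcd_lcm_dvd_prod_gcd _ _ _)
    calc d x * ∏ j ∈ s, d j ≤ d x * (L * P) := Nat.mul_le_mul_left _ ih
      _ = (Nat.gcd (d x) L * Nat.lcm (d x) L) * P := by rw [Nat.gcd_mul_lcm]; ring
      _ ≤ (G * Nat.lcm (d x) L) * P := by
          exact Nat.mul_le_mul_right _ (Nat.mul_le_mul_right _ hg)
      _ = Nat.lcm (d x) L * (P * G) := by ring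

lemma card_pairs (r : ℕ) :
    ((Finset.univ ×ˢ Finset.univ : Finset (Fin r × Fin r)).filter
      (fun p => p.1 < p.2)).card = r * (r - 1) / 2 := by
  rw [Finset.card_filter, Finset.sum_product_right]
  have h1 : ∀ y : Fin r, (∑ x : Fin r, if (x, y).1 < (x, y).2 then 1 else 0) = (y : ℕ) := by
    intro y
    rw [← Finset.card_filter]
    rw [Finset.filter_gt_eq_Iio, Fin.card_Iio]
  rw [Finset.sum_congr rfl fun y _ => h1 y]
  rw [Fin.sum_univ_eq_sum_range (fun i => i) r]
  exact Finset.sum_range_id r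

theorem lcm_of_close_divisors_large (a m t r : ℕ) (ha : 0 < a) (hm : 0 < m)
    (ht : 0 < t) (hr : 0 < r) (d : Fin r → ℕ) (hmono : StrictMono d)
    (hdvd : ∀ j, d j ∣ m) (hlow : a < d ⟨0, hr⟩) (hhigh : d ⟨r - 1, by omega⟩ ≤ a + t) :
    a ^ r ≤ m * t ^ (r * (r - 1) / 2) ∧
    (∏ j, d j) ≤ (Finset.univ.lcm d) *
      ∏ p ∈ (Finset.univ ×ˢ Finset.univ : Finset (Fin r × Fin r)).filter
        (fun p => p.1 < p.2), Nat.gcd (d p.1) (d p.2) ∧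
    ∀ i j : Fin r, i < j → Nat.gcd (d i) (d j) ≤ d j - d i := by
  have hda : ∀ j, a < d j := by
    intro j
    exact lt_of_lt_of_le hlow (hmono.monotone (Fin.mk_le_of_le_val (Nat.zero_le _)))
  have hdpos : ∀ j, 0 < d j := fun j => lt_of_le_of_lt (Nat.zero_le a) (hda j)
  have hgcd : ∀ i j : Fin r, i < j → Nat.gcd (d i) (d j) ≤ d j - d i := by
    intro i j hij
    have hlt : d i < d j := hmono hij
    have hdvd' : Nat.gcd (d i) (d j) ∣ d j - d i :=
      Nat.dvd_sub (Nat.gcd_dvd_right _ _) (Nat.gcd_dvd_left _ _)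
    exact Nat.le_of_dvd (by omega) hdvd'
  have hB := prod_le_lcm_mul_prod_gcd d hdpos Finset.univ
  refine ⟨?_, hB, hgcd⟩
  have hdt : ∀ j, d j ≤ a + t := by
    intro j
    refine le_trans (hmono.monotone ?_) hhigh
    have := j.isLt
    exact Fin.le_def.mpr (by simp; omega)
  have hlcm : Finset.univ.lcm d ≤ m := by
    refine Nat.le_of_dvd hm (Finset.lcm_dvd fun j _ => hdvd j)
  have hgt : ∀ p ∈ (Finset.univ ×ˢ Finset.univ : Finset (Fin r × Fin r)).filter
      (fun p => p.1 < p.2), Nat.gcd (d p.1) (d p.2) ≤ t := by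
    rintro ⟨i, j⟩ hp
    simp only [Finset.mem_filter] at hp
    dsimp only at hp ⊢
    have h1 := hgcd i j hp.2
    have h2 := hda i
    have h3 := hdt j
    omega
  calc a ^ r ≤ ∏ j, d j := by
        have : a ^ r = ∏ _j : Fin r, a := by simp
        rw [this]
        exact Finset.prod_le_prod (fun _ _ => Nat.zero_le a) fun j _ => (hda j).le
    _ ≤ (Finset.univ.lcm d) * ∏ p ∈ (Finset.univ ×ˢ Finset.univ :
          Finset (Fin r × Fin r)).filter (fun p => p.1 < p.2),
          Nat.gcd (d p.1) (d p.2) := hB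
    _ ≤ m * t ^ (r * (r - 1) / 2) := by
        refine Nat.mul_le_mul hlcm ?_
        calc (∏ p ∈ (Finset.univ ×ˢ Finset.univ : Finset (Fin r × Fin r)).filter
              (fun p => p.1 < p.2), Nat.gcd (d p.1) (d p.2))
            ≤ ∏ _p ∈ (Finset.univ ×ˢ Finset.univ : Finset (Fin r × Fin r)).filter
              (fun p => p.1 < p.2), t :=
              Finset.prod_le_prod (fun _ _ => Nat.zero_le _) hgt
          _ = t ^ (r * (r - 1) / 2) := by rw [Finset.prod_const, card_pairs]
end

section
/- For every positive integer m, log h(m) ≤ ∑_{p^j ∥ divides m, j ≥ 1} 1/p^j, i.e. writing m = ∏_{i=1}^k p_i^{α_i} for its prime factorization, log h(m) ≤ ∑_{i=1}^k ∑_{j=1}^{α_i} 1/p_i^j. -/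
/-!
`n ↦ ∑_{d ∣ n} 1/d` is multiplicative, being the Dirichlet product of `d ↦ 1/d` with `ζ`, and on a
prime power it equals `1 + ∑_{j=1}^{α} p⁻ʲ`. Hence `h(m)` is a product of factors `1 + x_p` with
`x_p ≥ 0`, and `1 + x ≤ eˣ` bounds it by `exp (∑_p x_p)`.
-/

open Finset

namespace ArithmeticFunction

variable (K : Type*) [Semifield K]

def natCastInv : ArithmeticFunction K := ⟨fun d => (d : K)⁻¹, by simp⟩

variable {K}

@[simp]
theorem natCastInv_apply (n : ℕ) : natCastInv K n = (n : K)⁻¹ := rfl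

theorem isMultiplicative_natCastInv : IsMultiplicative (natCastInv K) :=
  ⟨by simp, fun _ => by simp [mul_comm]⟩

end ArithmeticFunction

namespace Nat

open ArithmeticFunction

variable {K : Type*} [Semifield K]

theorem sum_divisors_inv_eq_prod_primeFactors {n : ℕ} (hn : n ≠ 0) :
    ∑ d ∈ n.divisors, (d : K)⁻¹ =
      ∏ p ∈ n.primeFactors, ∑ d ∈ (p ^ n.factorization p).divisors, (d : K)⁻¹ := by
  have := IsMultiplicative.multiplicative_factorization _
    (isMultiplicative_natCastInv (K := K) |>.mul isMultiplicative_zeta.natCast) hn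
  simpa only [coe_mul_zeta_apply, natCastInv_apply, prod_factorization_eq_prod_primeFactors]
    using this

theorem sum_divisors_prime_pow_inv {p : ℕ} (hp : p.Prime) (k : ℕ) :
    ∑ d ∈ (p ^ k).divisors, (d : K)⁻¹ = 1 + ∑ j ∈ Icc 1 k, ((p : K) ^ j)⁻¹ := by
  rw [sum_divisors_prime_pow hp, range_eq_Ico, sum_eq_sum_Ico_succ_bot k.succ_pos]
  simp [Ico_add_one_right_eq_Icc]

end Nat

theorem log_sum_reciprocal_divisors_le (m : ℕ) (hm : 0 < m) :
    Real.log (∑ d ∈ m.divisors, (1 : ℝ) / d) ≤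
      ∑ p ∈ m.primeFactors, ∑ j ∈ Finset.Icc 1 (m.factorization p), (1 : ℝ) / (p : ℝ) ^ j := by
  simp only [one_div]
  have hprod : ∑ d ∈ m.divisors, (d : ℝ)⁻¹ =
      ∏ p ∈ m.primeFactors, (1 + ∑ j ∈ Icc 1 (m.factorization p), ((p : ℝ) ^ j)⁻¹) := by
    rw [Nat.sum_divisors_inv_eq_prod_primeFactors hm.ne']
    exact prod_congr rfl fun p hp =>
      Nat.sum_divisors_prime_pow_inv (Nat.prime_of_mem_primeFactors hp) _
  rw [hprod, Real.log_le_iff_le_exp (by positivity)]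
  exact Real.prod_one_add_le_exp_sum _ fun p => by positivity
end

section
/- For any positive integer m, ∑_{p prime, p ∣ m} 1/p ≤ log log log m + O(1); that is, there is an absolute constant C such that for all m ≥ 16, ∑_{p ∣ m} 1/p ≤ log log log m + C. -/
open Finset Real
open scoped Nat

/-! Split the prime factors of `m` at `L = log m`. Those with `p ≤ L` contribute at most
`∑_{p ≤ L} 1/p = log log L + O(1)`, Mertens' second estimate, which follows by partial summation
from `∑_{p ≤ N} log p / p ≤ log N + log 4`; the latter comes from Legendre's formula for `N!`
and Chebyshev's bound `θ(N) ≤ N log 4`. The factors with `p > L` have product dividing `m`, so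
`∑ log p ≤ L`, and each satisfies `1/p ≤ log p / (L log L)`; they contribute at most
`1 / log L ≤ 1`. -/

theorem div_sub_div_le_log_sub_log {B L L' : ℝ} (hL : 0 < L) (hLL' : L ≤ L') (hB : B ≤ L) :
    B / L - B / L' ≤ log L' - log L := by
  have hL' : 0 < L' := hL.trans_le hLL'
  calc B / L - B / L' = B * (1 / L - 1 / L') := by ring
    _ ≤ L * (1 / L - 1 / L') :=
        mul_le_mul_of_nonneg_right hB (sub_nonneg.2 (one_div_le_one_div_of_le hL hLL'))
    _ = 1 - (L' / L)⁻¹ := by field_simp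
    _ ≤ log (L' / L) := one_sub_inv_le_log_of_pos (by positivity)
    _ = log L' - log L := log_div hL'.ne' hL.ne'

theorem exists_sum_range_div_log_le {a : ℕ → ℝ} {c : ℝ}
    (ha : ∀ N : ℕ, 2 ≤ N → ∑ n ∈ range (N + 1), a n ≤ log N + c) :
    ∃ K, ∀ N : ℕ, 2 ≤ N → ∑ n ∈ range (N + 1), a n / log n ≤ log (log N) + K := by
  set A : ℕ → ℝ := fun N ↦ ∑ n ∈ range (N + 1), a n
  set S : ℕ → ℝ := fun N ↦ ∑ n ∈ range (N + 1), a n / log n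
  -- Discrete partial summation: `Φ` is antitone because `A N - c ≤ log N`.
  set Φ : ℕ → ℝ := fun N ↦ S N - (A N - c) / log N - log (log N)
  have hΦ : AntitoneOn Φ {N | 2 ≤ N} := by
    refine antitoneOn_nat_Ici_of_succ_le fun N hN ↦ ?_
    have hlogN : 0 < log N := log_pos (by exact_mod_cast hN)
    have hlog_mono : log N ≤ log (N + 1 : ℕ) := log_le_log (by positivity) (by simp)
    have hstep := div_sub_div_le_log_sub_log hlogN hlog_mono
      (show A N - c ≤ log N by linarith [ha N hN])
    have hA : A (N + 1) = A N + a (N + 1) := sum_range_succ _ _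
    have hS : S (N + 1) = S N + a (N + 1) / log (N + 1 : ℕ) := sum_range_succ _ _
    have hsplit : (A N + a (N + 1) - c) / log (N + 1 : ℕ)
        = (A N - c) / log (N + 1 : ℕ) + a (N + 1) / log (N + 1 : ℕ) := by ring
    show S (N + 1) - (A (N + 1) - c) / log (N + 1 : ℕ) - log (log (N + 1 : ℕ)) ≤ Φ N
    rw [hA, hS, hsplit]
    linarith
  refine ⟨Φ 2 + 1, fun N hN ↦ ?_⟩
  have hlogN : 0 < log N := log_pos (by exact_mod_cast hN)
  have hquot : (A N - c) / log N ≤ 1 := (div_le_one hlogN).2 (by linarith [ha N hN])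
  have hΦN : Φ N ≤ Φ 2 := hΦ (le_refl 2) hN hN
  show S N ≤ _
  linarith

theorem sum_factorization_mul_log_le (n : ℕ) (s : Finset ℕ) :
    ∑ p ∈ s, (n.factorization p : ℝ) * log p ≤ log n := by
  rw [log_nat_eq_sum_factorization, Finsupp.sum_of_support_subset _ subset_union_right _
    (fun p _ ↦ by simp)]
  refine sum_le_sum_of_subset_of_nonneg subset_union_left fun p _ _ ↦ ?_
  positivity

theorem Nat.div_le_factorization_factorial {N p : ℕ} (hp : p.Prime) :
    N / p ≤ (N !).factorization p := by
  calc N / p ≤ (p * (N / p))!.factorization p := by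
        rw [Nat.factorization_factorial_mul hp]; exact le_add_self
    _ ≤ (N !).factorization p :=
        (Nat.factorization_le_iff_dvd (Nat.factorial_ne_zero _) (Nat.factorial_ne_zero _)).2
          (Nat.factorial_dvd_factorial (Nat.mul_div_le N p)) p

theorem sum_primesLE_div_mul_log_le_log_factorial (N : ℕ) :
    ∑ p ∈ N.primesLE, ((N / p : ℕ) : ℝ) * log p ≤ log (N ! : ℕ) :=
  (sum_le_sum fun p hp ↦ mul_le_mul_of_nonneg_right
    (by exact_mod_cast Nat.div_le_factorization_factorial (Nat.prime_of_mem_primesLE hp))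
    (log_natCast_nonneg p)).trans (sum_factorization_mul_log_le _ _)

theorem sum_primesLE_log_div_le (N : ℕ) :
    ∑ p ∈ N.primesLE, log p / p ≤ log N + log 4 := by
  rcases N.eq_zero_or_pos with rfl | hN
  · simp [Nat.primesLE_zero]; positivity
  have hN' : (0 : ℝ) < N := by exact_mod_cast hN
  have hterm : ∀ p ∈ N.primesLE, N * (log p / p) ≤ ((N / p : ℕ) : ℝ) * log p + log p := by
    intro p hp
    have hp0 : (0 : ℝ) < p := by exact_mod_cast (Nat.prime_of_mem_primesLE hp).pos
    have hdiv : (N : ℝ) / p ≤ (N / p : ℕ) + 1 := by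
      rw [div_le_iff₀ hp0, add_mul, one_mul]
      exact_mod_cast (Nat.lt_div_mul_add (Nat.prime_of_mem_primesLE hp).pos).le
    calc N * (log p / p) = N / p * log p := by ring
      _ ≤ ((N / p : ℕ) + 1) * log p := mul_le_mul_of_nonneg_right hdiv (log_natCast_nonneg p)
      _ = _ := by ring
  have hfact : log (N ! : ℕ) ≤ N * log N := by
    rw [← Real.log_pow]
    exact log_le_log (by positivity) (by exact_mod_cast Nat.factorial_le_pow N)
  have htheta : ∑ p ∈ N.primesLE, log p ≤ N * log 4 := by
    rw [← Chebyshev.theta_eq_sum_primesLE_log, mul_comm]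
    exact Chebyshev.theta_le_log4_mul_x hN'.le
  refine le_of_mul_le_mul_left ?_ hN'
  calc N * ∑ p ∈ N.primesLE, log p / p
      ≤ ∑ p ∈ N.primesLE, (((N / p : ℕ) : ℝ) * log p + log p) := by
        rw [mul_sum]; exact sum_le_sum hterm
    _ ≤ N * log N + N * log 4 := by
        rw [sum_add_distrib]
        linarith [sum_primesLE_div_mul_log_le_log_factorial N]
    _ = N * (log N + log 4) := by ring

theorem exists_sum_primesLE_one_div_le :
    ∃ K, ∀ N : ℕ, 2 ≤ N → ∑ p ∈ N.primesLE, (1 : ℝ) / p ≤ log (log N) + K := by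
  have hsum (N : ℕ) (f : ℕ → ℝ) : ∑ p ∈ N.primesLE, f p
      = ∑ n ∈ range (N + 1), if n.Prime then f n else 0 := sum_filter _ _
  obtain ⟨K, hK⟩ := exists_sum_range_div_log_le
    (a := fun n ↦ if n.Prime then log n / n else 0) (c := log 4)
    fun N _ ↦ (hsum N _).symm ▸ sum_primesLE_log_div_le N
  refine ⟨K, fun N hN ↦ (le_of_eq ?_).trans (hK N hN)⟩
  rw [hsum]
  refine sum_congr rfl fun n _ ↦ ?_
  split_ifs with hn
  · have : log n ≠ 0 := (log_pos (by exact_mod_cast hn.one_lt)).ne'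
    field_simp
  · simp

theorem sum_primeFactors_one_div_le_of_lt (m : ℕ) {L : ℝ} (hL : 1 < L) :
    ∑ p ∈ m.primeFactors with L < (p : ℕ), (1 : ℝ) / p ≤ log m / (L * log L) := by
  have hlogL : 0 < log L := log_pos hL
  have hlog : ∑ p ∈ m.primeFactors with L < (p : ℕ), log p ≤ log m := by
    refine (sum_le_sum fun p hp ↦ ?_).trans (sum_factorization_mul_log_le m _)
    obtain ⟨hp, hpm, hm⟩ := Nat.mem_primeFactors.1 (mem_filter.1 hp).1
    exact le_mul_of_one_le_left (log_natCast_nonneg p)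
      (by exact_mod_cast hp.factorization_pos_of_dvd hm hpm)
  calc ∑ p ∈ m.primeFactors with L < (p : ℕ), (1 : ℝ) / p
      ≤ ∑ p ∈ m.primeFactors with L < (p : ℕ), log p / (L * log L) := by
        refine sum_le_sum fun p hp ↦ ?_
        have hLp : L < p := (mem_filter.1 hp).2
        rw [div_le_div_iff₀ (by linarith) (by positivity), one_mul, mul_comm (log (p : ℝ))]
        exact mul_le_mul hLp.le (log_le_log (by linarith) hLp.le) hlogL.le (by linarith)
    _ ≤ log m / (L * log L) := by
        rw [← sum_div]; exact div_le_div_of_nonneg_right hlog (by positivity)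

theorem Nat.filter_primeFactors_le_subset_primesLE (m : ℕ) (x : ℝ) :
    {p ∈ m.primeFactors | (p : ℕ) ≤ x} ⊆ Nat.primesLE ⌊x⌋₊ := fun p hp ↦ by
  obtain ⟨hpm, hpx⟩ := mem_filter.1 hp
  exact Nat.mem_primesLE.2 ⟨Nat.le_floor hpx, Nat.prime_of_mem_primeFactors hpm⟩

theorem exp_one_lt_log_sixteen : exp 1 < log 16 := by
  rw [show (16 : ℝ) = 2 ^ 4 by norm_num, Real.log_pow]
  push_cast
  linarith [exp_one_lt_d9, log_two_gt_d9]

theorem sum_reciprocal_prime_divisors_le :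
    ∃ C : ℝ, ∀ m : ℕ, 16 ≤ m →
      (∑ p ∈ m.primeFactors, (1 : ℝ) / p) ≤ Real.log (Real.log (Real.log m)) + C := by
  obtain ⟨K, hK⟩ := exists_sum_primesLE_one_div_le
  refine ⟨K + 1, fun m hm ↦ ?_⟩
  set L := log m
  have hL : exp 1 ≤ L :=
    exp_one_lt_log_sixteen.le.trans (log_le_log (by norm_num) (by exact_mod_cast hm))
  have hL2 : 2 ≤ L := by linarith [add_one_le_exp 1]
  have hlogL : 1 ≤ log L := (le_log_iff_exp_le (by linarith)).2 hL
  have hfloor : 2 ≤ ⌊L⌋₊ := Nat.le_floor (by norm_num; exact hL2)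
  have hsmall :
      ∑ p ∈ m.primeFactors with (p : ℕ) ≤ L, (1 : ℝ) / p ≤ log (log L) + K := calc
    _ ≤ ∑ p ∈ Nat.primesLE ⌊L⌋₊, (1 : ℝ) / p := sum_le_sum_of_subset_of_nonneg
          (Nat.filter_primeFactors_le_subset_primesLE m L) fun _ _ _ ↦ by positivity
    _ ≤ log (log ⌊L⌋₊) + K := hK _ hfloor
    _ ≤ log (log L) + K := by
        gcongr
        · exact log_pos (by exact_mod_cast hfloor)
        · exact Nat.floor_le (by linarith)
  have hlarge : ∑ p ∈ m.primeFactors with L < (p : ℕ), (1 : ℝ) / p ≤ 1 := calc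
    _ ≤ L / (L * log L) := sum_primeFactors_one_div_le_of_lt m (by linarith)
    _ = 1 / log L := by field_simp
    _ ≤ 1 := (div_le_one (by linarith)).2 hlogL
  rw [← sum_filter_add_sum_filter_not _ (fun p : ℕ ↦ L < p)]
  simp only [not_lt]
  linarith
end

section
/- For all positive integers m and n, the probability that the order of a uniformly random permutation of {1,...,n} divides m is at most τ(m)/n, where τ(m) is the number of divisors of m. -/
/-! The cycle through `0` of a permutation `σ` with `orderOf σ ∣ m` has length some divisor `d`
of `m`, so it suffices to see that at most `(n - 1)!` permutations of `Fin n` put `0` on a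
`d`-cycle. Deleting `0` from its cycle (`Equiv.Perm.decomposeFin`) turns such a permutation into a
permutation of `Fin (n - 1)` together with a point on a `(d - 1)`-cycle of it, and by conjugation
the number of permutations putting a given point on a `(d - 1)`-cycle does not depend on the
point; induction on `n` finishes the count. -/

open scoped Classical

open Equiv Finset MulAction
open scoped Nat

namespace Equiv.Perm

section Period

variable {α : Type*}

theorem period_conj (g σ : Perm α) (x : α) : period (g * σ * g⁻¹) (g x) = period σ x := by
  refine Nat.dvd_right_iff_eq.mp fun n => ?_
  simp [← pow_smul_eq_iff_period_dvd, conj_pow, Perm.smul_def]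

variable [Fintype α]

noncomputable def permsWithPeriod (x : α) (d : ℕ) : Finset (Perm α) :=
  {σ | period σ x = d}

theorem card_permsWithPeriod_eq (x y : α) (d : ℕ) :
    #(permsWithPeriod x d) = #(permsWithPeriod y d) := by
  refine card_equiv (MulAut.conj (swap x y)).toEquiv fun σ => ?_
  simp only [permsWithPeriod, mem_filter, mem_univ, true_and, MulEquiv.toEquiv_eq_coe,
    MulEquiv.coe_toEquiv, MulAut.conj_apply]
  have h := period_conj (swap x y) σ x
  rw [swap_apply_left] at h
  rw [h]

end Period

theorem period_decomposeFin_symm_zero {k : ℕ} (e : Perm (Fin k)) :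
    period (decomposeFin.symm (0, e)) (0 : Fin (k + 1)) = 1 :=
  period_eq_one_iff.mpr (decomposeFin_symm_apply_zero 0 e)

theorem period_decomposeFin_symm_succ {k : ℕ} (q : Fin (k + 1)) (e : Perm (Fin (k + 1))) :
    period (decomposeFin.symm (q.succ, e)) (0 : Fin (k + 2)) = period e q + 1 := by
  set σ := decomposeFin.symm (q.succ, e)
  set t := period e q
  have ht : 0 < t := period_pos_of_orderOf_pos (orderOf_pos e) q
  have step (x : Fin (k + 1)) : σ x.succ = if e x = q then 0 else (e x).succ := by
    rw [decomposeFin_symm_apply_succ, swap_apply_def]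
    simp [Fin.succ_ne_zero, Fin.succ_inj]
  have orbit : ∀ i < t, (σ ^ (i + 1)) 0 = ((e ^ i) q).succ := by
    intro i hi
    induction i with
    | zero => simp [σ, decomposeFin_symm_apply_zero]
    | succ i ih =>
      have moved : e ((e ^ i) q) ≠ q := by
        rw [← mul_apply, ← pow_succ']
        exact pow_smul_ne_of_lt_period i.succ_pos hi
      rw [pow_succ', mul_apply, ih (by omega), step, if_neg moved, ← mul_apply, ← pow_succ']
  apply le_antisymm
  · refine period_le_of_fixed t.succ_pos ?_
    obtain ⟨s, hs⟩ : ∃ s, t = s + 1 := ⟨t - 1, by omega⟩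
    have back : e ((e ^ s) q) = q := by
      rw [← mul_apply, ← pow_succ', ← hs]
      exact pow_period_smul e q
    rw [Perm.smul_def, pow_succ', mul_apply, hs, orbit s (by omega), step, if_pos back]
  · refine le_period (period_pos_of_orderOf_pos (orderOf_pos σ) 0) fun j hj hjt => ?_
    obtain ⟨i, rfl⟩ : ∃ i, j = i + 1 := ⟨j - 1, by omega⟩
    rw [Perm.smul_def, orbit i (by omega)]
    exact Fin.succ_ne_zero _

theorem card_permsWithPeriod_one (k : ℕ) :
    #(permsWithPeriod (0 : Fin (k + 1)) 1) = k ! := by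
  calc #(permsWithPeriod (0 : Fin (k + 1)) 1) = #(univ : Finset (Perm (Fin k))) := by
        refine (card_bij (fun e _ => decomposeFin.symm (0, e)) (fun e _ => ?_)
          (fun _ _ _ _ h => ?_) fun σ hσ => ?_).symm
        · simpa [permsWithPeriod] using period_decomposeFin_symm_zero e
        · simpa using h
        · obtain ⟨⟨p, e⟩, rfl⟩ := decomposeFin.symm.surjective σ
          simp only [permsWithPeriod, mem_filter, mem_univ, true_and, period_eq_one_iff,
            Perm.smul_def, decomposeFin_symm_apply_zero] at hσ
          exact ⟨e, mem_univ _, by rw [hσ]⟩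
    _ = k ! := by simp [Fintype.card_perm]

theorem card_permsWithPeriod_succ_succ (k : ℕ) {d : ℕ} (hd : 0 < d) :
    #(permsWithPeriod (0 : Fin (k + 2)) (d + 1)) =
      (k + 1) * #(permsWithPeriod (0 : Fin (k + 1)) d) := by
  calc #(permsWithPeriod (0 : Fin (k + 2)) (d + 1))
      = #((univ : Finset (Fin (k + 1))).sigma fun q => permsWithPeriod q d) := by
        refine (card_bij (fun qe _ => decomposeFin.symm (qe.1.succ, qe.2)) (fun qe h => ?_)
          (fun _ _ _ _ h => ?_) fun σ hσ => ?_).symm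
        · simpa [permsWithPeriod, period_decomposeFin_symm_succ] using h
        · simpa [Sigma.ext_iff] using h
        · obtain ⟨⟨p, e⟩, rfl⟩ := decomposeFin.symm.surjective σ
          simp only [permsWithPeriod, mem_filter, mem_univ, true_and] at hσ
          cases p using Fin.cases with
          | zero => rw [period_decomposeFin_symm_zero] at hσ; omega
          | succ q =>
            rw [period_decomposeFin_symm_succ] at hσ
            exact ⟨⟨q, e⟩, by simpa [permsWithPeriod] using hσ, rfl⟩
    _ = ∑ q : Fin (k + 1), #(permsWithPeriod q d) := card_sigma _ _
    _ = (k + 1) * #(permsWithPeriod (0 : Fin (k + 1)) d) := by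
        simp [card_permsWithPeriod_eq _ (0 : Fin (k + 1))]

theorem card_permsWithPeriod_le (k : ℕ) {d : ℕ} (hd : 0 < d) :
    #(permsWithPeriod (0 : Fin (k + 1)) d) ≤ k ! := by
  induction k generalizing d with
  | zero => exact (card_filter_le _ _).trans (by simp)
  | succ k ih =>
    obtain rfl | ⟨d, hd', rfl⟩ : d = 1 ∨ ∃ d', 0 < d' ∧ d = d' + 1 := by
      rcases d with _ | _ | d <;> simp_all
    · exact (card_permsWithPeriod_one _).le
    · rw [card_permsWithPeriod_succ_succ k hd', Nat.factorial_succ]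
      exact Nat.mul_le_mul_left _ (ih hd')

theorem card_orderOf_dvd_le (n : ℕ) {m : ℕ} (hm : m ≠ 0) :
    #{σ : Perm (Fin (n + 1)) | orderOf σ ∣ m} ≤ #m.divisors * n ! := by
  rw [mul_comm]
  refine card_le_mul_card_image_of_maps_to (f := fun σ => period σ (0 : Fin (n + 1)))
    (fun σ hσ => ?_) _ fun d hd => ?_
  · rw [mem_filter] at hσ
    exact Nat.mem_divisors.mpr ⟨(period_dvd_orderOf σ 0).trans hσ.2, hm⟩
  · refine (card_le_card fun σ => ?_).trans
      (card_permsWithPeriod_le n (Nat.pos_of_mem_divisors hd))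
    simp [permsWithPeriod]

end Equiv.Perm

theorem prob_order_divides_le (m n : ℕ) (hm : 0 < m) (hn : 0 < n) :
    ((Finset.univ.filter (fun π : Equiv.Perm (Fin n) => orderOf π ∣ m)).card : ℝ) /
        (Nat.factorial n) ≤ (m.divisors.card : ℝ) / n := by
  obtain ⟨n, rfl⟩ : ∃ n', n = n' + 1 := ⟨n - 1, by omega⟩
  have hcount : (#{σ : Perm (Fin (n + 1)) | orderOf σ ∣ m} : ℝ) ≤ #m.divisors * n ! := by
    exact_mod_cast Perm.card_orderOf_dvd_le n hm.ne'
  calc (#{σ : Perm (Fin (n + 1)) | orderOf σ ∣ m} : ℝ) / (n + 1)!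
      ≤ #m.divisors * n ! / (n + 1)! := by gcongr
    _ = #m.divisors / (n + 1 : ℕ) := by
      rw [Nat.factorial_succ]
      push_cast
      field_simp
end

section
/- For all positive integers m and n, P(ord(π_n) = m) = (1/n) · ∑_{0 ≤ x < n, (n-x) ∣ m} P(lcm(ord(π_x), n−x) = m), where π_x is a uniformly random permutation of {1,...,x} (and ord of the empty permutation is 1). -/
/-!
Fix a point `z` and condition on its orbit `s`. Splitting a permutation along `s` and its
complement, the permutations whose `z`-orbit is exactly `s` correspond to pairs consisting of a
cyclic permutation of `s` (there are `(#s - 1)!` of them, each of order `#s`) and an arbitrary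
permutation `σ` of the complement; the order of the pair is `lcm (orderOf σ) #s`. There are
`(n - 1).choose x` sets `s ∋ z` with complement of size `x`, and
`(n - 1).choose x * (n - 1 - x)! * x! = (n - 1)!`, so dividing by `n! = n * (n - 1)!` gives the
recursion.
-/

open scoped Classical
open Finset Nat Equiv

namespace Equiv.Perm

variable {α β : Type*}

theorem subtypeCongr_subtypePerm {p : α → Prop} [DecidablePred p] (π : Perm α)
    (h : ∀ a, p (π a) ↔ p a) :
    (π.subtypePerm h).subtypeCongr (π.subtypePerm fun a => not_congr (h a)) = π := by
  ext a
  by_cases ha : p a <;> simp [ha]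

theorem orderOf_subtypeCongr {p : α → Prop} [DecidablePred p] (c : Perm {a // p a})
    (σ : Perm {a // ¬p a}) : orderOf (c.subtypeCongr σ) = (orderOf c).lcm (orderOf σ) := by
  rw [← Prod.orderOf_mk]
  exact orderOf_injective (subtypeCongrHom p) (subtypeCongrHom_injective p) (c, σ)

theorem sameCycle_subtypeCongr_iff {p : α → Prop} [DecidablePred p] (c : Perm {a // p a})
    (σ : Perm {a // ¬p a}) (a : {a // p a}) (b : α) :
    (c.subtypeCongr σ).SameCycle a b ↔ ∃ hb : p b, c.SameCycle a ⟨b, hb⟩ := by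
  have hzpow (i : ℤ) : ((c.subtypeCongr σ) ^ i) a = (c ^ i) a := by
    change (subtypeCongrHom p (c, σ) ^ i) a = _
    rw [← map_zpow, Prod.pow_mk, subtypeCongrHom_apply, subtypeCongr.left_apply_subtype]
  simp only [SameCycle, hzpow]
  constructor
  · rintro ⟨i, rfl⟩
    exact ⟨((c ^ i) a).2, i, rfl⟩
  · rintro ⟨hb, i, hi⟩
    exact ⟨i, by rw [hi]⟩

theorem isCycleOn_univ_iff_forall_sameCycle (c : Perm β) (a : β) :
    c.IsCycleOn .univ ↔ ∀ b, c.SameCycle a b :=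
  ⟨fun hc _ => hc.2 trivial trivial, fun h =>
    ⟨c.bijective.bijOn_univ, fun x _ y _ => (h x).symm.trans (h y)⟩⟩

theorem IsCycleOn.orderOf_eq_card [Fintype β] [Nonempty β] {c : Perm β}
    (hc : c.IsCycleOn .univ) : orderOf c = Fintype.card β := by
  obtain ⟨a⟩ := ‹Nonempty β›
  rw [← Finset.coe_univ] at hc
  have hpow (k : ℕ) : c ^ k = 1 ↔ Fintype.card β ∣ k := by
    refine ⟨fun h => (hc.pow_apply_eq (mem_univ a)).1 (by rw [h, one_apply]), fun h => ?_⟩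
    ext b
    obtain ⟨i, -, rfl⟩ := hc.exists_pow_eq (mem_univ a) (mem_univ b)
    rw [← mul_apply, ← pow_add, add_comm, pow_add, mul_apply,
      (hc.pow_apply_eq (mem_univ a)).2 h, one_apply]
  exact Nat.dvd_antisymm (orderOf_dvd_of_pow_eq_one ((hpow _).2 dvd_rfl))
    ((hpow _).1 (pow_orderOf_eq_one c))

theorem isCycleOn_univ_iff_cycleType [Fintype β] (hβ : 2 ≤ Fintype.card β) {c : Perm β} :
    c.IsCycleOn .univ ↔ c.cycleType = {Fintype.card β} := by
  have huniv : (.univ : Set β).Nontrivial := by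
    have : Nontrivial β := Fintype.one_lt_card_iff_nontrivial.1 hβ
    exact Set.nontrivial_univ
  constructor
  · intro hc
    have hsupp : c.support = univ :=
      eq_univ_of_forall fun a => mem_support.2 (hc.apply_ne huniv trivial)
    have hcyc : c.IsCycle := isCycle_iff_exists_isCycleOn.2 ⟨_, huniv, hc, fun _ _ => trivial⟩
    rw [hcyc.cycleType, hsupp, Finset.card_univ]
  · intro hc
    have hcyc : c.IsCycle := card_cycleType_eq_one.1 (by rw [hc, Multiset.card_singleton])
    have hsupp : c.support = univ :=
      eq_univ_of_card _ (by rw [← sum_cycleType, hc, Multiset.sum_singleton])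
    simpa [← coe_support_eq_set_support, hsupp] using hcyc.isCycleOn

theorem card_isCycleOn_univ [Fintype β] [Nonempty β] :
    #{c : Perm β | c.IsCycleOn .univ} = (Fintype.card β - 1)! := by
  rcases (Nat.one_le_iff_ne_zero.2 Fintype.card_ne_zero : 1 ≤ Fintype.card β).eq_or_lt with h | h
  · have : Subsingleton β := Fintype.card_le_one_iff_subsingleton.1 h.ge
    simp [isCycleOn_of_subsingleton, ← h]
  · simp_rw [isCycleOn_univ_iff_cycleType h]
    rw [card_of_cycleType_singleton h le_rfl, Nat.choose_self, mul_one]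

variable [Fintype α] [DecidableEq α]

def orbitFinset (π : Perm α) (a : α) : Finset α := {b | π.SameCycle a b}

theorem mem_orbitFinset {π : Perm α} {a b : α} : b ∈ π.orbitFinset a ↔ π.SameCycle a b := by
  simp [orbitFinset]

theorem apply_mem_orbitFinset_iff {π : Perm α} {a b : α} :
    π b ∈ π.orbitFinset a ↔ b ∈ π.orbitFinset a := by
  simp only [mem_orbitFinset, sameCycle_apply_right]

theorem orbitFinset_subtypeCongr_eq_iff {s : Finset α} (c : Perm s) (σ : Perm {a // a ∉ s})
    (a : s) : (c.subtypeCongr σ).orbitFinset a = s ↔ c.IsCycleOn .univ := by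
  simp only [isCycleOn_univ_iff_forall_sameCycle c a, Finset.ext_iff, mem_orbitFinset,
    sameCycle_subtypeCongr_iff]
  exact ⟨fun h b => ((h b).2 b.2).2, fun h b => ⟨fun ⟨hb, _⟩ => hb, fun hb => ⟨hb, h _⟩⟩⟩

theorem card_filter_orderOf_orbitFinset (P : ℕ → Prop) [DecidablePred P] {z : α}
    {s : Finset α} (hz : z ∈ s) :
    #{π : Perm α | P (orderOf π) ∧ π.orbitFinset z = s} =
      (#s - 1)! * #{σ : Perm {a // a ∉ s} | P ((orderOf σ).lcm #s)} := by
  have : Nonempty s := ⟨⟨z, hz⟩⟩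
  have horderOf {c : Perm s} (hc : c.IsCycleOn .univ) (σ : Perm {a // a ∉ s}) :
      orderOf (c.subtypeCongr σ) = (orderOf σ).lcm #s := by
    rw [orderOf_subtypeCongr, hc.orderOf_eq_card, Fintype.card_coe, Nat.lcm_comm]
  rw [← Fintype.card_coe s, ← card_isCycleOn_univ, ← card_product,
    ← card_image_of_injective _ (subtypeCongrHom_injective (· ∈ s))]
  congr 1
  ext π
  simp only [mem_image, mem_product, mem_filter, mem_univ, true_and, Prod.exists,
    subtypeCongrHom_apply, Fintype.card_coe]
  constructor
  · rintro ⟨hP, hπ⟩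
    have hinv (a : α) : π a ∈ s ↔ a ∈ s := by rw [← hπ, apply_mem_orbitFinset_iff]
    have hπ' := subtypeCongr_subtypePerm π hinv
    have hc : (π.subtypePerm hinv).IsCycleOn .univ := by
      rw [← orbitFinset_subtypeCongr_eq_iff _ _ ⟨z, hz⟩, hπ', hπ]
    exact ⟨_, _, ⟨hc, by rwa [← hπ', horderOf hc] at hP⟩, hπ'⟩
  · rintro ⟨c, σ, ⟨hc, hσ⟩, rfl⟩
    exact ⟨by rwa [horderOf hc], (orbitFinset_subtypeCongr_eq_iff c σ ⟨z, hz⟩).2 hc⟩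

end Equiv.Perm

variable {α : Type*} [Fintype α] [DecidableEq α]

theorem sum_filter_mem_eq_sum_range_choose {M : Type*} [AddCommMonoid M] (z : α) (f : ℕ → M) :
    ∑ s : Finset α with z ∈ s, f #sᶜ =
      ∑ x ∈ range (Fintype.card α), (Fintype.card α - 1).choose x • f x := by
  have hpos : 0 < Fintype.card α := Fintype.card_pos_iff.2 ⟨z⟩
  have h := sum_powerset_apply_card f (x := univ.erase z)
  rw [card_erase_of_mem (mem_univ z), Finset.card_univ, Nat.sub_add_cancel hpos] at h
  rw [← h]
  refine sum_nbij' compl compl ?_ ?_ ?_ ?_ fun _ _ => rfl <;> simp [subset_erase]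

theorem card_filter_orderOf_congr {β γ : Type*} [Fintype β] [DecidableEq β] [Fintype γ]
    [DecidableEq γ] (e : β ≃ γ) (P : ℕ → Prop) [DecidablePred P] :
    #{σ : Perm β | P (orderOf σ)} = #{τ : Perm γ | P (orderOf τ)} :=
  card_equiv e.permCongr fun σ => by simp [← e.permCongrHom.orderOf_eq σ]

theorem card_filter_orderOf_eq_sum (P : ℕ → Prop) [DecidablePred P] (z : α) :
    #{π : Perm α | P (orderOf π)} =
      ∑ x ∈ range (Fintype.card α), (Fintype.card α - 1).choose x *
        ((Fintype.card α - 1 - x)! *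
          #{σ : Perm (Fin x) | P ((orderOf σ).lcm (Fintype.card α - x))}) := by
  rw [card_eq_sum_card_fiberwise (f := (·.orbitFinset z)) (t := {s | z ∈ s})
    fun π _ => mem_filter.2 ⟨mem_univ _, Perm.mem_orbitFinset.2 (.refl π z)⟩]
  simp_rw [filter_filter, ← smul_eq_mul (a := (Fintype.card α - 1).choose _)]
  rw [← sum_filter_mem_eq_sum_range_choose z]
  refine sum_congr rfl fun s hs => ?_
  have hsc : Fintype.card {a // a ∉ s} = #sᶜ := by simp [card_compl]
  rw [Perm.card_filter_orderOf_orbitFinset P (mem_filter.1 hs).2,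
    card_filter_orderOf_congr (Fintype.equivFinOfCardEq hsc) fun k => P (k.lcm #s),
    card_compl, Nat.sub_sub_self (card_le_univ s)]
  congr 2
  have := card_le_univ s
  omega

theorem prob_order_recursion_general (m n : ℕ) (hn : 0 < n) :
    ((Finset.univ.filter (fun π : Equiv.Perm (Fin n) => orderOf π = m)).card : ℝ) /
        (Nat.factorial n) =
      (1 / n) * ∑ x ∈ Finset.range n,
        if (n - x) ∣ m then
          ((Finset.univ.filter
              (fun π : Equiv.Perm (Fin x) => Nat.lcm (orderOf π) (n - x) = m)).card : ℝ) /
            (Nat.factorial x)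
        else 0 := by
  rw [card_filter_orderOf_eq_sum (· = m) (⟨0, hn⟩ : Fin n), Fintype.card_fin, Nat.cast_sum,
    sum_div, mul_sum]
  refine sum_congr rfl fun x hx => ?_
  have hxn : x ≤ n - 1 := Nat.le_sub_one_of_lt (mem_range.1 hx)
  split_ifs with hdvd
  · have hchoose : ((n - 1).choose x * x ! * (n - 1 - x)! : ℝ) = (n - 1)! := by
      exact_mod_cast Nat.choose_mul_factorial_mul_factorial hxn
    have hfact : (n ! : ℝ) = n * (n - 1)! := by
      exact_mod_cast (Nat.mul_factorial_pred hn.ne').symm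
    have hC : ((n - 1).choose x : ℝ) ≠ 0 := by exact_mod_cast (Nat.choose_pos hxn).ne'
    rw [hfact, ← hchoose]
    push_cast
    field_simp
  · have hempty : #{σ : Perm (Fin x) | (orderOf σ).lcm (n - x) = m} = 0 :=
      card_eq_zero.2 <| filter_eq_empty_iff.2 fun σ _ (hσ : (orderOf σ).lcm (n - x) = m) =>
        hdvd (hσ ▸ Nat.dvd_lcm_right _ _)
    simp [hempty]

theorem prob_order_recursion (m n : ℕ) (hm : 0 < m) (hn : 0 < n) :
    ((Finset.univ.filter (fun π : Equiv.Perm (Fin n) => orderOf π = m)).card : ℝ) /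
        (Nat.factorial n) =
      (1 / n) * ∑ x ∈ Finset.range n,
        if (n - x) ∣ m then
          ((Finset.univ.filter
              (fun π : Equiv.Perm (Fin x) => Nat.lcm (orderOf π) (n - x) = m)).card : ℝ) /
            (Nat.factorial x)
        else 0 :=
  prob_order_recursion_general m n hn
end

section
/- For every n, if k ∈ K_n := {k ∈ {0,...,n−1} : lcm(1,...,k) divides n−k} and a permutation π ∈ S_n has a cycle of length n−k, then ord(π) = n−k. -/
theorem order_eq_of_cycle_in_Kn (n k : ℕ) (hk : k < n)
    (hdvd : (Finset.Icc 1 k).lcm id ∣ n - k)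
    (π : Equiv.Perm (Fin n)) (hcyc : (n - k) ∈ π.cycleType) :
    orderOf π = n - k := by
  have hord : orderOf π = π.cycleType.lcm := (Equiv.Perm.lcm_cycleType π).symm
  obtain ⟨s, hs⟩ := Multiset.exists_cons_of_mem hcyc
  have hsum : π.cycleType.sum ≤ n := by
    rw [Equiv.Perm.sum_cycleType]
    simpa using Finset.card_le_univ π.support
  refine Nat.dvd_antisymm ?_ ?_
  · rw [hord]
    apply Multiset.lcm_dvd.2
    intro c hc
    rw [hs, Multiset.mem_cons] at hc
    rcases hc with rfl | hc
    · exact dvd_rfl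
    · have h2 : 2 ≤ c := Equiv.Perm.two_le_of_mem_cycleType (by rw [hs]; exact Multiset.mem_cons_of_mem hc)
      have hle : c ≤ k := by
        have := Multiset.single_le_sum (fun x _ => Nat.zero_le x) c hc
        have hsum' : (n - k) + s.sum ≤ n := by
          rw [hs, Multiset.sum_cons] at hsum; exact hsum
        omega
      have : c ∣ (Finset.Icc 1 k).lcm id := by
        have : c ∈ Finset.Icc 1 k := Finset.mem_Icc.2 ⟨by omega, hle⟩
        exact Finset.dvd_lcm this
      exact this.trans hdvd
  · rw [hord]
    exact Multiset.dvd_lcm hcyc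
end

section
/- If k and k' are both elements of K_n := {k ∈ {0,...,n−1} : lcm(1,...,k) divides n−k} with k < k', then lcm(1,...,k) divides k' − k; in particular, if k ≥ 2 then k' − k ≥ 2. -/
theorem Kn_gap (n k k' : ℕ) (hk : k < n) (hk' : k' < n) (hlt : k < k')
    (hdvd : (Finset.Icc 1 k).lcm id ∣ n - k)
    (hdvd' : (Finset.Icc 1 k').lcm id ∣ n - k') :
    (Finset.Icc 1 k).lcm id ∣ k' - k ∧ (2 ≤ k → 2 ≤ k' - k) := by
  have hsub : (Finset.Icc 1 k) ⊆ (Finset.Icc 1 k') := by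
    apply Finset.Icc_subset_Icc_right hlt.le
  have hL : (Finset.Icc 1 k).lcm id ∣ (Finset.Icc 1 k').lcm id :=
    Finset.lcm_mono hsub
  have h1 : (Finset.Icc 1 k).lcm id ∣ n - k' := hL.trans hdvd'
  have hdiff : (Finset.Icc 1 k).lcm id ∣ k' - k := by
    have : k' - k = (n - k) - (n - k') := by omega
    rw [this]
    exact Nat.dvd_sub hdvd h1
  refine ⟨hdiff, fun h2 => ?_⟩
  have h2mem : (2 : ℕ) ∈ Finset.Icc 1 k := by simp; omega
  have h2d : (2 : ℕ) ∣ (Finset.Icc 1 k).lcm id := Finset.dvd_lcm h2mem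
  have : (2 : ℕ) ∣ k' - k := h2d.trans hdiff
  omega
end

section
/- For any prime power q = p^α ≤ N (p prime), the probability that the order of a uniformly random permutation of {1,...,N} is NOT divisible by q equals ∏_{j=1}^{⌊N/q⌋} (1 − 1/(jq)). -/
/-!
A prime power `q` divides `orderOf π` iff it divides the length of some cycle of `π`, so we count
the permutations of `Fin n` without cycles of length divisible by `q`. Under `decomposeFin`, the
permutation of `Fin (n + 1)` with code `(p, e)` either fixes `0` (if `p = 0`) or arises from `e` by
inserting `0` into the cycle through `p - 1`, which lengthens that cycle by one. Following the
cycle of the inserted point as it grows shows that the proportion `a n` of such permutations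
satisfies `a 0 = 1` and `n * a n = ∑_{s < n, q ∤ n - s} a s`. So does
`g n = ∏_{j ≤ n / q} (1 - 1 / (j q))`: it only changes at multiples `n` of `q`, where
`n * g n = (n - 1) * g (n - 1)`, and with this the sum over `s < n`, `s ≢ n (mod q)`, is computed
by induction on `n`.
-/

open Finset Function
open scoped Classical Nat

namespace Equiv.Perm

variable {α : Type*}

theorem SameCycle.minimalPeriod_eq [Finite α] {π : Perm α} {x y : α} (h : π.SameCycle x y) :
    minimalPeriod π x = minimalPeriod π y := by
  obtain ⟨k, rfl⟩ := h.exists_nat_pow_eq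
  rw [coe_pow, minimalPeriod_apply_iterate (π.injective.mem_periodicPts x)]

theorem sameCycle_iterate (π : Perm α) (x : α) (k : ℕ) : π.SameCycle x (π^[k] x) :=
  ⟨k, by rw [zpow_natCast, coe_pow]⟩

theorem minimalPeriod_conj (σ π : Perm α) (x : α) :
    minimalPeriod (σ * π * σ⁻¹) (σ x) = minimalPeriod π x := by
  refine minimalPeriod_eq_minimalPeriod_iff.mpr fun n => ?_
  simp only [IsPeriodicPt, IsFixedPt, ← coe_pow, conj_pow, mul_apply, coe_inv, symm_apply_apply,
    EmbeddingLike.apply_eq_iff_eq]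

theorem prime_pow_dvd_orderOf_iff [Finite α] {p k : ℕ} (hp : p.Prime) (hk : k ≠ 0)
    (π : Perm α) : p ^ k ∣ orderOf π ↔ ∃ x, p ^ k ∣ minimalPeriod π x := by
  refine ⟨fun h => ?_, fun ⟨x, hx⟩ => hx.trans (MulAction.period_dvd_orderOf π x)⟩
  obtain ⟨k, rfl⟩ := Nat.exists_eq_succ_of_ne_zero hk
  set n := orderOf π / p ^ (k + 1)
  have hn : n ≠ 0 := (Nat.div_pos (Nat.le_of_dvd (orderOf_pos π) h) (pow_pos hp.pos _)).ne'
  have hρ : orderOf (π ^ n) = p ^ (k + 1) := orderOf_pow_orderOf_div (orderOf_pos π).ne' h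
  -- Some point has period exactly `p ^ (k + 1)` under `π ^ n`; its `π`-period is a multiple.
  obtain ⟨x, hx⟩ : ∃ x, ((π ^ n) ^ p ^ k) x ≠ x := by
    by_contra! hfix
    exact pow_ne_one_of_lt_orderOf (pow_ne_zero _ hp.ne_zero)
      (hρ ▸ pow_lt_pow_right₀ hp.one_lt k.lt_succ_self) (ext hfix)
  have hρx : minimalPeriod (π ^ n) x = p ^ (k + 1) := by
    refine Nat.eq_prime_pow_of_dvd_least_prime_pow hp (fun hd => hx ?_) ?_
    · simpa [IsPeriodicPt, IsFixedPt, ← coe_pow] using isPeriodicPt_iff_minimalPeriod_dvd.mpr hd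
    · exact hρ ▸ MulAction.period_dvd_orderOf (π ^ n) x
  refine ⟨x, ?_⟩
  rw [← hρx, coe_pow, minimalPeriod_iterate_eq_div_gcd hn]
  exact Nat.div_dvd_of_dvd (Nat.gcd_dvd_left _ _)

section DecomposeFin

variable {n : ℕ} (e : Perm (Fin n))

theorem decomposeFin_symm_succ_apply_succ (p z : Fin n) :
    decomposeFin.symm (p.succ, e) z.succ = if e z = p then 0 else (e z).succ := by
  rw [decomposeFin_symm_apply_succ]
  split_ifs with h
  · simp [h]
  · exact swap_apply_of_ne_of_ne (Fin.succ_ne_zero _) ((Fin.succ_injective _).ne h)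

theorem iterate_decomposeFin_symm_apply_succ {p : Fin (n + 1)} {z : Fin n}
    (hz : ∀ k, (e^[k] z).succ ≠ p) (k : ℕ) :
    (decomposeFin.symm (p, e))^[k] z.succ = (e^[k] z).succ := by
  induction k with
  | zero => rfl
  | succ k ih =>
    rw [iterate_succ_apply', ih, decomposeFin_symm_apply_succ, ← iterate_succ_apply' e,
      swap_apply_of_ne_of_ne (Fin.succ_ne_zero _) (hz _)]

theorem minimalPeriod_decomposeFin_symm_apply_succ {p : Fin (n + 1)} {z : Fin n}
    (hz : ∀ k, (e^[k] z).succ ≠ p) :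
    minimalPeriod (decomposeFin.symm (p, e)) z.succ = minimalPeriod e z := by
  refine minimalPeriod_eq_minimalPeriod_iff.mpr fun k => ?_
  rw [IsPeriodicPt, IsFixedPt, iterate_decomposeFin_symm_apply_succ e hz, Fin.succ_inj]
  rfl

theorem not_sameCycle_decomposeFin_symm_zero_succ {p : Fin (n + 1)} {z : Fin n}
    (hz : ∀ k, (e^[k] z).succ ≠ p) : ¬ (decomposeFin.symm (p, e)).SameCycle 0 z.succ := by
  intro h
  obtain ⟨k, hk⟩ := h.symm.exists_nat_pow_eq
  rw [coe_pow, iterate_decomposeFin_symm_apply_succ e hz] at hk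
  exact Fin.succ_ne_zero _ hk

theorem iterate_decomposeFin_symm_succ_apply_zero {p : Fin n} {k : ℕ}
    (hk : k < minimalPeriod e p) :
    (decomposeFin.symm (p.succ, e))^[k + 1] 0 = (e^[k] p).succ := by
  induction k with
  | zero => simp
  | succ k ih =>
    rw [iterate_succ_apply', ih (by omega), decomposeFin_symm_succ_apply_succ,
      ← iterate_succ_apply' e, if_neg]
    exact not_isPeriodicPt_of_pos_of_lt_minimalPeriod k.succ_ne_zero hk

theorem minimalPeriod_decomposeFin_symm_succ_apply_zero (p : Fin n) :
    minimalPeriod (decomposeFin.symm (p.succ, e)) 0 = minimalPeriod e p + 1 := by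
  set τ := decomposeFin.symm (p.succ, e)
  obtain ⟨ℓ, hℓ⟩ := Nat.exists_eq_succ_of_ne_zero
    (minimalPeriod_pos_of_mem_periodicPts (e.injective.mem_periodicPts p)).ne'
  have hper : IsPeriodicPt τ (ℓ + 2) 0 := by
    rw [IsPeriodicPt, IsFixedPt, iterate_succ_apply', iterate_decomposeFin_symm_succ_apply_zero e
      (by omega), decomposeFin_symm_succ_apply_succ, ← iterate_succ_apply' e, ← hℓ,
      iterate_minimalPeriod, if_pos rfl]
  rw [hℓ]
  refine le_antisymm (hper.minimalPeriod_le (by omega)) (not_lt.mp fun hlt => ?_)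
  obtain ⟨m, hm⟩ := Nat.exists_eq_succ_of_ne_zero (hper.minimalPeriod_pos (by omega)).ne'
  have h0 := iterate_minimalPeriod (f := τ) (x := 0)
  rw [hm, iterate_decomposeFin_symm_succ_apply_zero e (by omega)] at h0
  exact Fin.succ_ne_zero _ h0

theorem sameCycle_decomposeFin_symm_succ_zero_succ (p z : Fin n) :
    (decomposeFin.symm (p.succ, e)).SameCycle 0 z.succ ↔ e.SameCycle p z := by
  refine ⟨fun h => ?_, fun h => ?_⟩
  · by_contra hpz
    refine not_sameCycle_decomposeFin_symm_zero_succ e (fun k hk => hpz ?_) h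
    exact Fin.succ_inj.mp hk ▸ (sameCycle_iterate e z k).symm
  · obtain ⟨k, rfl⟩ := h.exists_nat_pow_eq
    have hℓ := minimalPeriod_pos_of_mem_periodicPts (e.injective.mem_periodicPts p)
    refine ⟨(k % minimalPeriod e p + 1 : ℕ), ?_⟩
    rw [zpow_natCast, coe_pow, iterate_decomposeFin_symm_succ_apply_zero e (Nat.mod_lt _ hℓ),
      iterate_mod_minimalPeriod_eq, coe_pow]

end DecomposeFin

section Counting

variable (q : ℕ)

def NoCycleLengthDvd (π : Perm α) : Prop := ∀ x, ¬ q ∣ minimalPeriod π x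

/-- The cycle through `a` is counted as if it had `j` more points. -/
def NoCycleLengthDvdShift (j : ℕ) (π : Perm α) (a : α) : Prop :=
  (∀ y, ¬ π.SameCycle a y → ¬ q ∣ minimalPeriod π y) ∧ ¬ q ∣ minimalPeriod π a + j

noncomputable def noCycleLengthDvdCount (n : ℕ) : ℕ :=
  #{π : Perm (Fin n) | NoCycleLengthDvd q π}

noncomputable def noCycleLengthDvdShiftCount (j n : ℕ) : ℕ :=
  #{π : Perm (Fin (n + 1)) | NoCycleLengthDvdShift q j π 0}

variable {q} {n j : ℕ}

theorem noCycleLengthDvdShift_zero_iff [Finite α] {π : Perm α} {a : α} :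
    NoCycleLengthDvdShift q 0 π a ↔ NoCycleLengthDvd q π := by
  refine ⟨fun ⟨hoff, ha⟩ y => ?_, fun h => ⟨fun y _ => h y, h a⟩⟩
  by_cases hy : π.SameCycle a y
  · exact hy.minimalPeriod_eq ▸ ha
  · exact hoff y hy

theorem noCycleLengthDvdShift_conj_iff (σ π : Perm α) (a : α) :
    NoCycleLengthDvdShift q j (σ * π * σ⁻¹) (σ a) ↔ NoCycleLengthDvdShift q j π a := by
  simp only [NoCycleLengthDvdShift, minimalPeriod_conj, sameCycle_conj, coe_inv, symm_apply_apply]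
  refine and_congr_left' ⟨fun h y hy => ?_, fun h y hy => ?_⟩
  · rw [← minimalPeriod_conj σ]
    exact h (σ y) (by rwa [symm_apply_apply])
  · have := h (σ.symm y) hy
    rwa [← minimalPeriod_conj σ, apply_symm_apply] at this

theorem noCycleLengthDvdShift_decomposeFin_symm_zero_iff (e : Perm (Fin n)) :
    NoCycleLengthDvdShift q j (decomposeFin.symm (0, e)) 0 ↔
      ¬ q ∣ j + 1 ∧ NoCycleLengthDvd q e := by
  have hz (z : Fin n) : ∀ k, (e^[k] z).succ ≠ 0 := fun _ => Fin.succ_ne_zero _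
  have h0 : minimalPeriod (decomposeFin.symm (0, e)) 0 = 1 :=
    minimalPeriod_eq_one_iff_isFixedPt.mpr (decomposeFin_symm_apply_zero 0 e)
  simp only [NoCycleLengthDvdShift, Fin.forall_fin_succ, SameCycle.refl, not_true,
    IsEmpty.forall_iff, true_and, not_sameCycle_decomposeFin_symm_zero_succ e (hz _),
    not_false_eq_true, forall_const, minimalPeriod_decomposeFin_symm_apply_succ e (hz _), h0,
    add_comm 1 j]
  exact and_comm

theorem noCycleLengthDvdShift_decomposeFin_symm_succ_iff (e : Perm (Fin n)) (p : Fin n) :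
    NoCycleLengthDvdShift q j (decomposeFin.symm (p.succ, e)) 0 ↔
      NoCycleLengthDvdShift q (j + 1) e p := by
  have hz {z : Fin n} (hz : ¬ e.SameCycle p z) : ∀ k, (e^[k] z).succ ≠ p.succ := fun k hk =>
    hz (Fin.succ_inj.mp hk ▸ (sameCycle_iterate e z k).symm)
  simp only [NoCycleLengthDvdShift, Fin.forall_fin_succ, SameCycle.refl, not_true,
    IsEmpty.forall_iff, true_and, sameCycle_decomposeFin_symm_succ_zero_succ,
    minimalPeriod_decomposeFin_symm_succ_apply_zero, add_right_comm _ 1 j]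
  refine and_congr_left' (forall_congr' fun z => imp_congr_right fun hpz => ?_)
  rw [minimalPeriod_decomposeFin_symm_apply_succ e (hz hpz)]

theorem card_noCycleLengthDvdShift (a : Fin (n + 1)) :
    #{π : Perm (Fin (n + 1)) | NoCycleLengthDvdShift q j π a} =
      noCycleLengthDvdShiftCount q j n := by
  refine (card_equiv (MulAut.conj (swap 0 a)).toEquiv fun π => ?_).symm
  have := noCycleLengthDvdShift_conj_iff (q := q) (j := j) (swap 0 a) π 0
  rw [swap_apply_left] at this
  simpa using this.symm

theorem noCycleLengthDvdCount_zero : noCycleLengthDvdCount q 0 = 1 := by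
  simp [noCycleLengthDvdCount, NoCycleLengthDvd]

theorem noCycleLengthDvdCount_succ (n : ℕ) :
    noCycleLengthDvdCount q (n + 1) = noCycleLengthDvdShiftCount q 0 n := by
  simp only [noCycleLengthDvdCount, noCycleLengthDvdShiftCount, noCycleLengthDvdShift_zero_iff]

theorem noCycleLengthDvdShiftCount_eq (j n : ℕ) :
    noCycleLengthDvdShiftCount q j n = (if q ∣ j + 1 then 0 else noCycleLengthDvdCount q n) +
      ∑ p : Fin n, #{e : Perm (Fin n) | NoCycleLengthDvdShift q (j + 1) e p} := by
  simp only [noCycleLengthDvdShiftCount, noCycleLengthDvdCount, card_filter]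
  rw [← decomposeFin.symm.sum_comp, Fintype.sum_prod_type, Fin.sum_univ_succ]
  simp only [noCycleLengthDvdShift_decomposeFin_symm_zero_iff,
    noCycleLengthDvdShift_decomposeFin_symm_succ_iff]
  split_ifs with h <;> simp [h]

-- The summand `s` accounts for the permutations whose cycle through `0` has `m + 1 - s` points.
theorem noCycleLengthDvdShiftCount_div_factorial (j m : ℕ) :
    (noCycleLengthDvdShiftCount q j m : ℝ) / m ! = ∑ s ∈ range (m + 1),
      if q ∣ m + 1 - s + j then 0 else (noCycleLengthDvdCount q s : ℝ) / s ! := by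
  induction m generalizing j with
  | zero =>
    simp [noCycleLengthDvdShiftCount_eq, noCycleLengthDvdCount_zero, add_comm 1 j, apply_ite]
  | succ m ih =>
    rw [noCycleLengthDvdShiftCount_eq]
    simp only [card_noCycleLengthDvdShift, sum_const, card_univ, Fintype.card_fin, smul_eq_mul]
    have hshift : ∀ s ∈ range (m + 1), (if q ∣ m + 1 + 1 - s + j then (0 : ℝ)
        else (noCycleLengthDvdCount q s : ℝ) / s !) =
        if q ∣ m + 1 - s + (j + 1) then 0 else (noCycleLengthDvdCount q s : ℝ) / s ! :=
      fun s hs => by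
        rw [show m + 1 + 1 - s + j = m + 1 - s + (j + 1) by have := mem_range.mp hs; omega]
    rw [sum_range_succ, sum_congr rfl hshift, ← ih, Nat.factorial_succ,
      show m + 1 + 1 - (m + 1) + j = j + 1 by omega]
    push_cast
    split_ifs <;> field_simp <;> ring

theorem succ_mul_noCycleLengthDvdCount_div_factorial (n : ℕ) :
    (n + 1) * ((noCycleLengthDvdCount q (n + 1) : ℝ) / (n + 1)!) =
      ∑ s ∈ range (n + 1),
        if q ∣ n + 1 - s then 0 else (noCycleLengthDvdCount q s : ℝ) / s ! := by
  have h := noCycleLengthDvdShiftCount_div_factorial (q := q) 0 n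
  simp only [add_zero] at h
  rw [← h, noCycleLengthDvdCount_succ, Nat.factorial_succ]
  push_cast
  field_simp

end Counting

end Equiv.Perm

noncomputable def avoidanceProduct (q t : ℕ) : ℝ := ∏ j ∈ Icc 1 t, (1 - 1 / ((j : ℝ) * q))

theorem avoidanceProduct_succ (q t : ℕ) :
    avoidanceProduct q (t + 1) = avoidanceProduct q t * (1 - 1 / ((t + 1 : ℝ) * q)) := by
  rw [avoidanceProduct, prod_Icc_succ_top (by omega), ← avoidanceProduct]
  push_cast
  rfl

theorem succ_mul_avoidanceProduct_succ_div (q n : ℕ) :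
    (n + 1 : ℝ) * avoidanceProduct q ((n + 1) / q) =
      (n + if q ∣ n + 1 then 0 else 1) * avoidanceProduct q (n / q) := by
  split_ifs with h
  · have hM : ((n / q : ℕ) + 1 : ℝ) * q = n + 1 := by
      exact_mod_cast (Nat.succ_div_of_dvd h) ▸ Nat.div_mul_cancel h
    rw [Nat.succ_div_of_dvd h, avoidanceProduct_succ, hM]
    field_simp
    ring
  · rw [Nat.succ_div_of_not_dvd h]

theorem sum_range_ite_mod_avoidanceProduct {q r : ℕ} (hr : r < q) (n : ℕ) :
    ∑ s ∈ range n, (if s % q = r then 0 else avoidanceProduct q (s / q)) =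
      (n - if r < n % q then 1 else 0) * avoidanceProduct q (n / q) := by
  induction n with
  | zero => simp
  | succ n ih =>
    have hmod : (n % q + 1) % q = (n + 1) % q := Nat.mod_add_mod n q 1
    have hlt : n % q + 1 ≤ q := Nat.mod_lt n (by omega)
    rw [sum_range_succ, ih]
    by_cases h : q ∣ n + 1
    · have hq : n % q + 1 = q := le_antisymm hlt <|
        Nat.le_of_dvd (Nat.succ_pos _) (Nat.dvd_of_mod_eq_zero (hmod ▸ Nat.mod_eq_zero_of_dvd h))
      rw [Nat.mod_eq_zero_of_dvd h, if_neg (Nat.not_lt_zero r), sub_zero, Nat.cast_succ,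
        succ_mul_avoidanceProduct_succ_div, if_pos h, add_zero]
      split_ifs <;> first | omega | ring
    · have hq : (n + 1) % q = n % q + 1 := by
        refine hmod ▸ Nat.mod_eq_of_lt (lt_of_le_of_ne hlt fun he => h ?_)
        exact Nat.dvd_of_mod_eq_zero (by rw [← hmod, he, Nat.mod_self])
      rw [Nat.succ_div_of_not_dvd h, hq]
      push_cast
      split_ifs <;> first | omega | ring

theorem sum_range_ite_dvd_sub_avoidanceProduct {q : ℕ} (hq : 0 < q) (n : ℕ) :
    ∑ s ∈ range n, (if q ∣ n - s then 0 else avoidanceProduct q (s / q)) =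
      n * avoidanceProduct q (n / q) := by
  have h := sum_range_ite_mod_avoidanceProduct (Nat.mod_lt n hq) n
  rw [if_neg (lt_irrefl _), sub_zero] at h
  rw [← h]
  exact sum_congr rfl fun s hs =>
    if_congr (Nat.modEq_iff_dvd' (mem_range.mp hs).le).symm rfl rfl

theorem eq_avoidanceProduct_of_recurrence {q : ℕ} (hq : 0 < q) {a : ℕ → ℝ} (h0 : a 0 = 1)
    (h : ∀ n : ℕ, (n + 1) * a (n + 1) =
      ∑ s ∈ range (n + 1), if q ∣ n + 1 - s then 0 else a s) (n : ℕ) :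
    a n = avoidanceProduct q (n / q) := by
  induction n using Nat.strong_induction_on with
  | _ n ih =>
    rcases n with _ | n
    · simp [h0, avoidanceProduct]
    · have hrec := h n
      rw [sum_congr rfl fun s hs => by rw [ih s (mem_range.mp hs)], ← Nat.cast_succ,
        sum_range_ite_dvd_sub_avoidanceProduct hq] at hrec
      exact mul_left_cancel₀ (by positivity) hrec

theorem Equiv.Perm.noCycleLengthDvdCount_eq {q : ℕ} (hq : 0 < q) (n : ℕ) :
    (noCycleLengthDvdCount q n : ℝ) = n ! * avoidanceProduct q (n / q) := by
  have h := eq_avoidanceProduct_of_recurrence hq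
    (a := fun n => (noCycleLengthDvdCount q n : ℝ) / n !)
    (by simp [noCycleLengthDvdCount_zero]) succ_mul_noCycleLengthDvdCount_div_factorial n
  rw [← h]
  field_simp

theorem prob_order_not_divisible_by_prime_power_general (N p α : ℕ) (hp : p.Prime) (hα : 1 ≤ α) :
    ((Finset.univ.filter
        (fun π : Equiv.Perm (Fin N) => ¬ (p ^ α ∣ orderOf π))).card : ℝ) /
        (Nat.factorial N) =
      ∏ j ∈ Finset.Icc 1 (N / p ^ α), (1 - 1 / ((j : ℝ) * (p ^ α : ℕ))) := by
  have hcount : #{π : Equiv.Perm (Fin N) | ¬ p ^ α ∣ orderOf π} =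
      Equiv.Perm.noCycleLengthDvdCount (p ^ α) N := by
    refine congrArg card (filter_congr fun π _ => ?_)
    rw [Equiv.Perm.prime_pow_dvd_orderOf_iff hp (by omega), not_exists]
    rfl
  rw [hcount, Equiv.Perm.noCycleLengthDvdCount_eq (pow_pos hp.pos α),
    mul_div_cancel_left₀ _ (Nat.cast_ne_zero.mpr N.factorial_ne_zero)]
  rfl

theorem prob_order_not_divisible_by_prime_power (N p α : ℕ) (hp : p.Prime) (hα : 1 ≤ α)
    (hq : p ^ α ≤ N) (hN : 0 < N) :
    ((Finset.univ.filter
        (fun π : Equiv.Perm (Fin N) => ¬ (p ^ α ∣ orderOf π))).card : ℝ) /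
        (Nat.factorial N) =
      ∏ j ∈ Finset.Icc 1 (N / p ^ α), (1 - 1 / ((j : ℝ) * (p ^ α : ℕ))) :=
  prob_order_not_divisible_by_prime_power_general N p α hp hα
end
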